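/- arXiv:2005.07220 — 3 statements merged into one kernel-verified Lean document; each statement's English description precedes it below -/
import Mathlib

section
/- Let G be a group acting by isometries on a metric space X, and suppose the action is acylindrical: for every ε ≥ 0 there exist N > 0 and R > 0 such that for all x, y ∈ X with d(x,y) ≥ R, the set {g ∈ G : d(x, gx) ≤ ε and d(y, gy) ≤ ε} has at most N elements. If g ∈ G is a loxodromic element (i.e., for some x ∈ X and constants λ > 0, C ≥ 0, one has d(gⁿx, gᵐx) ≥ λ|n−m| − C for all integers n, m), then the centralizer of g in G is countable. -/
/-!
Fix a base point `x` and a radius `r`. A loxodromic `g` has a power `gⁿ` moving `x` by at least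
the acylindricity constant `R(r)`. An element `h` commuting with `g` also commutes with `gⁿ`, so it
moves `gⁿ • x` exactly as much as it moves `x`. Hence the elements of the centralizer moving `x` by
at most `r` move both `x` and `gⁿ • x` by at most `r`, and there are only finitely many of them.
Exhausting the centralizer by the radii `r = 0, 1, 2, …` shows that it is countable.
-/

section

variable {G X : Type*} [Group G] [PseudoMetricSpace X] [MulAction G X]

theorem Set.Countable.of_countable_dist_smul_le {S : Set G} (x : X)
    (hS : ∀ r : ℝ, 0 ≤ r → {h ∈ S | dist x (h • x) ≤ r}.Countable) : S.Countable := by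
  have hcover : S ⊆ ⋃ k : ℕ, {h ∈ S | dist x (h • x) ≤ k} := fun h hh =>
    Set.mem_iUnion.2 ⟨⌈dist x (h • x)⌉₊, hh, Nat.le_ceil _⟩
  exact (Set.countable_iUnion fun k : ℕ => hS k k.cast_nonneg).mono hcover

theorem dist_smul_smul_of_commute {a h : G} (ha : Isometry (fun x : X => a • x))
    (hc : Commute h a) (x : X) : dist (a • x) (h • a • x) = dist x (h • x) := by
  rw [smul_smul, hc.eq, mul_smul]
  exact ha.dist_eq x (h • x)

theorem exists_le_dist_zpow_smul {g : G} {x : X} {l C : ℝ} (hl : 0 < l)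
    (hlox : ∀ n : ℤ, l * |(n : ℝ)| - C ≤ dist x (g ^ n • x)) (R : ℝ) :
    ∃ n : ℤ, R ≤ dist x (g ^ n • x) := by
  obtain ⟨n, hn⟩ := exists_nat_ge ((R + C) / l)
  refine ⟨n, le_trans ?_ (hlox n)⟩
  rw [Int.cast_natCast, Nat.abs_cast]
  linarith [(div_le_iff₀ hl).mp hn]

end

/-- If a group `G` acts acylindrically by isometries on a metric space `X`
and `g ∈ G` is loxodromic, then the centralizer of `g` is countable. -/
theorem stmt_4 {G X : Type*} [Group G] [MetricSpace X] [MulAction G X]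
    (hiso : ∀ g : G, Isometry (fun x : X => g • x))
    (hacyl : ∀ ε : ℝ, 0 ≤ ε → ∃ N : ℕ, 0 < N ∧ ∃ R : ℝ, 0 < R ∧
      ∀ x y : X, R ≤ dist x y →
        {h : G | dist x (h • x) ≤ ε ∧ dist y (h • y) ≤ ε}.Finite ∧
        {h : G | dist x (h • x) ≤ ε ∧ dist y (h • y) ≤ ε}.ncard ≤ N)
    (g : G)
    (hlox : ∃ x : X, ∃ l C : ℝ, 0 < l ∧ 0 ≤ C ∧
      ∀ n m : ℤ, l * |(n : ℝ) - m| - C ≤ dist (g ^ n • x) (g ^ m • x)) :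
    {h : G | h * g = g * h}.Countable := by
  obtain ⟨x, l, C, hl, -, hd⟩ := hlox
  refine Set.Countable.of_countable_dist_smul_le x fun r hr => ?_
  obtain ⟨_, -, R, -, hfinite⟩ := hacyl r hr
  have horbit : ∀ n : ℤ, l * |(n : ℝ)| - C ≤ dist x (g ^ n • x) := fun n => by
    simpa [dist_comm] using hd n 0
  obtain ⟨n, hn⟩ := exists_le_dist_zpow_smul hl horbit R
  refine (hfinite x (g ^ n • x) hn).1.countable.mono ?_
  rintro h ⟨hcomm, hle⟩
  exact ⟨hle, (dist_smul_smul_of_commute (hiso _) (Commute.zpow_right hcomm n) x).trans_le hle⟩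
end

section
/- Let G and H be groups, i : H → G an injective homomorphism, and suppose there exists a sequence of homomorphisms (ρₙ : G → H) such that ρₙ ∘ i = id_H for all n and such that (ρₙ) is discriminating (for every finite B ⊆ G \ {1} there is n₀ with ρₙ(b) ≠ 1 for all b ∈ B, n ≥ n₀). Then i(H) is existentially closed in G: every finite system of equations and inequations with constants in i(H) that has a solution in G has a solution in i(H). -/
/-- A subgroup `H ≤ G` is existentially closed in `G` if every finite system of
equations and inequations with constants in `H` (encoded as words in a free group on
variables and constants) which has a solution in `G` has a solution in `H`. -/
def IsExistentiallyClosed {G : Type*} [Group G] (H : Subgroup G) : Prop :=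
  ∀ (k : ℕ) (E I : Finset (FreeGroup (Fin k ⊕ H))),
    (∃ x : Fin k → G,
      (∀ w ∈ E, FreeGroup.lift (Sum.elim x (fun h : H => (h : G))) w = 1) ∧
      (∀ w ∈ I, FreeGroup.lift (Sum.elim x (fun h : H => (h : G))) w ≠ 1)) →
    (∃ x : Fin k → H,
      (∀ w ∈ E, FreeGroup.lift (Sum.elim x id) w = 1) ∧
      (∀ w ∈ I, FreeGroup.lift (Sum.elim x id) w ≠ 1))

/-!
A retraction `r : G → K` onto a subgroup fixes the constants of a system, so it
maps a solution in `G` to a tuple in `K` that still satisfies every equation; it satisfies the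
inequations as well as soon as `r` kills none of the finitely many values of the inequation
words at the solution, and a discriminating sequence of retractions provides such an `r`.
-/

namespace Subgroup

variable {G : Type*} [Group G] {K : Subgroup G}

theorem lift_sumElim_comp_retraction (r : G →* K) (hr : r.comp K.subtype = MonoidHom.id K)
    {ι : Type*} (x : ι → G) (w : FreeGroup (ι ⊕ K)) :
    FreeGroup.lift (Sum.elim (r ∘ x) id) w =
      r (FreeGroup.lift (Sum.elim x ((↑) : K → G)) w) := by
  refine (FreeGroup.lift_unique (r.comp (FreeGroup.lift (Sum.elim x ((↑) : K → G)))) ?_).symm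
  rintro (j | h)
  · simp
  · simpa using DFunLike.congr_fun hr h

theorem isExistentiallyClosed_of_exists_retraction
    (h : ∀ B : Finset G, (1 : G) ∉ B →
      ∃ r : G →* K, r.comp K.subtype = MonoidHom.id K ∧ ∀ b ∈ B, r b ≠ 1) :
    IsExistentiallyClosed K := by
  classical
  rintro k E I ⟨x, hE, hI⟩
  obtain ⟨r, hr, hrI⟩ := h (I.image (FreeGroup.lift (Sum.elim x ((↑) : K → G))))
    (by simpa [eq_comm] using hI)
  refine ⟨r ∘ x, fun w hw => ?_, fun w hw => ?_⟩
  · rw [lift_sumElim_comp_retraction r hr, hE w hw, map_one]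
  · rw [lift_sumElim_comp_retraction r hr]
    exact hrI _ (Finset.mem_image_of_mem _ hw)

end Subgroup

theorem MonoidHom.rangeRestrict_comp_comp_subtype_of_comp_eq_id {G H : Type*} [Group G]
    [Group H] {i : H →* G} {ρ : G →* H} (hρ : ρ.comp i = MonoidHom.id H) :
    (i.rangeRestrict.comp ρ).comp i.range.subtype = MonoidHom.id i.range := by
  ext ⟨_, a, rfl⟩
  simp [← MonoidHom.comp_apply ρ i, hρ]

theorem stmt_15_general {G H : Type*} [Group G] [Group H] (i : H →* G)
    (ρ : ℕ → (G →* H))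
    (hret : ∀ n, (ρ n).comp i = MonoidHom.id H)
    (hdis : ∀ B : Finset G, (1 : G) ∉ B →
      ∃ n₀ : ℕ, ∀ n ≥ n₀, ∀ b ∈ B, ρ n b ≠ 1) :
    IsExistentiallyClosed i.range := by
  refine Subgroup.isExistentiallyClosed_of_exists_retraction fun B hB => ?_
  obtain ⟨n₀, hn₀⟩ := hdis B hB
  refine ⟨i.rangeRestrict.comp (ρ n₀),
    i.rangeRestrict_comp_comp_subtype_of_comp_eq_id (hret n₀), fun b hb => ?_⟩
  have hinj : Function.Injective i.rangeRestrict := i.rangeRestrict_injective_iff.mpr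
    (Function.LeftInverse.injective (g := ρ n₀) (DFunLike.congr_fun (hret n₀)))
  rw [MonoidHom.comp_apply, Ne, map_eq_one_iff _ hinj]
  exact hn₀ n₀ le_rfl b hb

/-- If `i : H → G` is an injective homomorphism admitting a
discriminating sequence of retractions `ρₙ : G → H` (with `ρₙ ∘ i = id`), then
`i(H)` is existentially closed in `G`. -/
theorem stmt_15 {G H : Type*} [Group G] [Group H] (i : H →* G)
    (hi : Function.Injective i) (ρ : ℕ → (G →* H))
    (hret : ∀ n, (ρ n).comp i = MonoidHom.id H)
    (hdis : ∀ B : Finset G, (1 : G) ∉ B →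
      ∃ n₀ : ℕ, ∀ n ≥ n₀, ∀ b ∈ B, ρ n b ≠ 1) :
    IsExistentiallyClosed i.range :=
  stmt_15_general i ρ hret hdis
end

section
/- Let G be a group acting by isometries on metric spaces (Xₙ, dₙ) via homomorphisms φₙ : G → Isom(Xₙ), all factoring through actions of a fixed group H acting acylindrically on a fixed space (X, d) with uniform constants: for every ε ≥ 0 there exist N, R such that for all n and all x, y ∈ X with d(x,y) ≥ R, at most N elements of H move both x and y by at most ε. Let U be a nonprincipal ultrafilter on ℕ and suppose (φₙ : G → H) is a discriminating sequence of homomorphisms. Then the induced action of G on the ultralimit space X_U = (∏ₙ X)/U with metric d_U([xₙ],[yₙ]) = lim_U d(xₙ, yₙ) (restricted to a component where the limit is finite), given by g · [xₙ] = [φₙ(g)xₙ], is acylindrical: for every ε > 0, taking N, R as above for ε, for any x_U, y_U ∈ X_U with d_U(x_U, y_U) ≥ R, the set {g ∈ G : d_U(x_U, g x_U) ≤ ε and d_U(y_U, g y_U) ≤ ε} has at most N elements. -/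
/-- Let `H` act acylindrically by isometries on a metric space `X`, let
`U` be a nonprincipal ultrafilter on ℕ and let `(φₙ : G → H)` be a discriminating
sequence of homomorphisms. Then the induced action of `G` on the ultralimit of `X` is
acylindrical: for every `ε > 0` there are acylindricity constants `N, R` for `ε` (for
the `H`-action on `X`) such that for all sequences `x, y` in `X` whose `U`-limit
distance is at least `R`, the set of `g ∈ G` whose `U`-limit displacements of `x` and
`y` are at most `ε` has at most `N` elements.  Here "`U`-limit of `dist ≥ R`" is
expressed as `∀ c < R, ∀ᶠ n in U, c ≤ dist (x n) (y n)`, and "`U`-limit of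
`dist ≤ ε`" as `∀ c > ε, ∀ᶠ n in U, dist ≤ c`. -/
theorem stmt_19 {G H X : Type*} [Group G] [Group H] [MetricSpace X] [MulAction H X]
    (hiso : ∀ h : H, Isometry (fun x : X => h • x))
    (hacyl : ∀ ε : ℝ, 0 ≤ ε → ∃ N : ℕ, 0 < N ∧ ∃ R : ℝ, 0 < R ∧
      ∀ x y : X, R ≤ dist x y →
        {h : H | dist x (h • x) ≤ ε ∧ dist y (h • y) ≤ ε}.Finite ∧
        {h : H | dist x (h • x) ≤ ε ∧ dist y (h • y) ≤ ε}.ncard ≤ N)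
    (U : Ultrafilter ℕ) (hU : (U : Filter ℕ) ≤ Filter.cofinite)
    (φ : ℕ → (G →* H))
    (hdis : ∀ B : Finset G, (1 : G) ∉ B →
      ∃ n₀ : ℕ, ∀ n ≥ n₀, ∀ b ∈ B, φ n b ≠ 1) :
    ∀ ε : ℝ, 0 < ε → ∃ N : ℕ, 0 < N ∧ ∃ R : ℝ, 0 < R ∧
      (∀ x y : X, R ≤ dist x y →
        {h : H | dist x (h • x) ≤ ε ∧ dist y (h • y) ≤ ε}.Finite ∧
        {h : H | dist x (h • x) ≤ ε ∧ dist y (h • y) ≤ ε}.ncard ≤ N) ∧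
      ∀ x y : ℕ → X,
        (∀ c : ℝ, c < R → ∀ᶠ n in (U : Filter ℕ), c ≤ dist (x n) (y n)) →
        {g : G | ∀ c : ℝ, ε < c →
            (∀ᶠ n in (U : Filter ℕ), dist (x n) (φ n g • x n) ≤ c) ∧
            (∀ᶠ n in (U : Filter ℕ), dist (y n) (φ n g • y n) ≤ c)}.Finite ∧
        {g : G | ∀ c : ℝ, ε < c →
            (∀ᶠ n in (U : Filter ℕ), dist (x n) (φ n g • x n) ≤ c) ∧
            (∀ᶠ n in (U : Filter ℕ), dist (y n) (φ n g • y n) ≤ c)}.ncard ≤ N := by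
  intro ε hε
  obtain ⟨N, hN, R₀, hR₀, hmain⟩ := hacyl (ε + 1) (by linarith)
  refine ⟨N, hN, R₀ + 1, by linarith, ?_, ?_⟩
  · intro x y hxy
    obtain ⟨hfin, hcard⟩ := hmain x y (by linarith)
    have hsub : {h : H | dist x (h • x) ≤ ε ∧ dist y (h • y) ≤ ε} ⊆
        {h : H | dist x (h • x) ≤ ε + 1 ∧ dist y (h • y) ≤ ε + 1} := by
      intro h ⟨h1, h2⟩; exact ⟨by linarith, by linarith⟩
    exact ⟨hfin.subset hsub, le_trans (Set.ncard_le_ncard hsub hfin) hcard⟩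
  · intro x y hxy
    set S := {g : G | ∀ c : ℝ, ε < c →
        (∀ᶠ n in (U : Filter ℕ), dist (x n) (φ n g • x n) ≤ c) ∧
        (∀ᶠ n in (U : Filter ℕ), dist (y n) (φ n g • y n) ≤ c)} with hS
    have key : ∀ E : Finset G, ↑E ⊆ S → E.card ≤ N := by
      intro E hE
      classical
      set B : Finset G := ((E ×ˢ E).filter (fun p => p.1 ≠ p.2)).image
        (fun p => p.1 * p.2⁻¹) with hB
      have h1B : (1 : G) ∉ B := by
        simp only [hB, Finset.mem_image, Finset.mem_filter, Finset.mem_product]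
        rintro ⟨⟨a, b⟩, ⟨⟨ha, hb⟩, hne⟩, hab⟩
        exact hne (by rwa [mul_inv_eq_one] at hab)
      obtain ⟨n₀, hn₀⟩ := hdis B h1B
      have ev1 : ∀ᶠ n in (U : Filter ℕ), n₀ ≤ n := by
        apply hU
        rw [Nat.cofinite_eq_atTop]
        exact Filter.eventually_ge_atTop n₀
      have ev2 : ∀ᶠ n in (U : Filter ℕ), R₀ ≤ dist (x n) (y n) :=
        hxy R₀ (by linarith)
      have ev3 : ∀ᶠ n in (U : Filter ℕ), ∀ g ∈ E,
          dist (x n) (φ n g • x n) ≤ ε + 1 ∧ dist (y n) (φ n g • y n) ≤ ε + 1 := by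
        rw [Filter.eventually_all_finset]
        intro g hg
        obtain ⟨e1, e2⟩ := hE hg (ε + 1) (by linarith)
        filter_upwards [e1, e2] with n h1 h2 using ⟨h1, h2⟩
      obtain ⟨n, hn1, hn2, hn3⟩ := (ev1.and (ev2.and ev3)).exists
      have hinj : Set.InjOn (φ n) ↑E := by
        intro a ha b hb hab
        by_contra hne
        have hmem : a * b⁻¹ ∈ B := by
          simp only [hB, Finset.mem_image, Finset.mem_filter, Finset.mem_product]
          exact ⟨(a, b), ⟨⟨ha, hb⟩, hne⟩, rfl⟩
        exact hn₀ n hn1 _ hmem (by rw [map_mul, map_inv, hab, mul_inv_cancel])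
      obtain ⟨hfin, hcard⟩ := hmain (x n) (y n) hn2
      have hsub : ↑(E.image (φ n)) ⊆
          {h : H | dist (x n) (h • x n) ≤ ε + 1 ∧ dist (y n) (h • y n) ≤ ε + 1} := by
        intro h hh
        simp only [Finset.coe_image, Set.mem_image, Finset.mem_coe] at hh
        obtain ⟨g, hg, rfl⟩ := hh
        exact hn3 g hg
      calc E.card = (E.image (φ n)).card := (Finset.card_image_of_injOn hinj).symm
        _ = (↑(E.image (φ n)) : Set H).ncard := (Set.ncard_coe_finset _).symm
        _ ≤ _ := Set.ncard_le_ncard hsub hfin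
        _ ≤ N := hcard
    have hSfin : S.Finite := by
      by_contra hinf
      obtain ⟨t, hts, htc⟩ := Set.Infinite.exists_subset_card_eq hinf (N + 1)
      have := key t hts
      omega
    refine ⟨hSfin, ?_⟩
    rw [Set.ncard_eq_toFinset_card S hSfin]
    exact key hSfin.toFinset (by simp)
end
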